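/- Fix integers n, p ≥ 1. There exists a universal constant C > 0 such that for every estimator F̂, i.e., every measurable function F̂ : (ℝ^p)^n → ℝ of a sample X_1, …, X_n drawn i.i.d. from N(0, Σ), the worst-case risk over the class D_p of diagonal covariance matrices satisfies sup_{Σ ∈ D_p} E_Σ[(F̂(X_1,…,X_n) − ‖Σ‖_F²)²] ≥ C · p/n, where ‖Σ‖_F² = Σ_{i,j} σ_ij² is the squared Frobenius norm. -/

import Mathlib

open MeasureTheory ProbabilityTheory Matrix ENNReal Classical

/-- The standard Gaussian measure on `ι → ℝ` (i.i.d. standard normals). -/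
noncomputable def stdGaussian (ι : Type*) [Fintype ι] : Measure (ι → ℝ) :=
  Measure.pi fun _ => gaussianReal 0 1

/-- The centered Gaussian measure `N(0, S)` on `ι → ℝ` with covariance matrix `S`,
realized as the pushforward of the standard Gaussian by the positive semidefinite
square root of `S`. (Junk value if `S` is not positive semidefinite.) -/
noncomputable def gaussianVec {ι : Type*} [Fintype ι] [DecidableEq ι]
    (S : Matrix ι ι ℝ) : Measure (ι → ℝ) :=
  if h : S.PosSemidef then (stdGaussian ι).map
    ((h.1.eigenvectorUnitary : Matrix ι ι ℝ) *
      diagonal (RCLike.ofReal ∘ Real.sqrt ∘ h.1.eigenvalues) *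
      (star h.1.eigenvectorUnitary : Matrix ι ι ℝ)).mulVec else stdGaussian ι

/-- The law of a sample of `n` i.i.d. observations from `N(0, S)`. -/
noncomputable def sampleMeasure {ι : Type*} [Fintype ι] [DecidableEq ι]
    (n : ℕ) (S : Matrix ι ι ℝ) : Measure (Fin n → ι → ℝ) :=
  Measure.pi fun _ => gaussianVec S

/-!
Le Cam's two-point method with `Σ₀ = I` and `Σ₁ = (1 - δ)² I`, where `δ = 1 / (2 √(n p))`.
Both sample laws have explicit product densities, so their Hellinger affinity is `ρ^(n p / 2)`
with `ρ = 2 (1 - δ) / (1 + (1 - δ)²) ≥ 1 - δ²`; Bernoulli's inequality makes its square at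
least `3 / 4`. The squared Frobenius norms differ by `p (1 - (1 - δ)⁴) ≥ p δ`, and any estimator
pays at least `(p δ)² · (3 / 4) / 2 = 3 p / (32 n)` in total risk at the two hypotheses.
-/

open Real
open scoped NNReal

namespace MeasureTheory

theorem lintegral_fin_nat_prod_eq_prod {n : ℕ} {E : Type*}
    [MeasurableSpace E] {μ : Fin n → Measure E} [∀ i, SigmaFinite (μ i)]
    {f : Fin n → E → ℝ≥0∞} (hf : ∀ i, Measurable (f i)) :
    ∫⁻ x, ∏ i, f i (x i) ∂Measure.pi μ = ∏ i, ∫⁻ x, f i x ∂μ i := by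
  induction n with
  | zero => simp
  | succ n ih =>
    calc
      _ = ∫⁻ x : E × (Fin n → E),
          f 0 x.1 * ∏ i : Fin n, f (Fin.succ i) (x.2 i)
          ∂((μ 0).prod (Measure.pi (fun i ↦ μ i.succ))) := by
        rw [(measurePreserving_piFinSuccAbove μ 0).symm.lintegral_map_equiv]
        simp_rw [MeasurableEquiv.piFinSuccAbove_symm_apply, Fin.insertNthEquiv,
          Fin.prod_univ_succ, Fin.insertNth_zero, Equiv.coe_fn_mk, Fin.cons_succ,
          Fin.zero_succAbove, cast_eq, Fin.cons_zero]
      _ = (∫⁻ x, f 0 x ∂μ 0) * ∏ i : Fin n, ∫⁻ x, f i.succ x ∂μ i.succ := by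
        rw [← ih fun i ↦ hf i.succ]
        exact lintegral_prod_mul (hf 0).aemeasurable
          (Finset.measurable_prod _ fun (i : Fin n) _ ↦
            (hf i.succ).comp (measurable_pi_apply i)).aemeasurable
      _ = ∏ i, ∫⁻ x, f i x ∂μ i := by rw [Fin.prod_univ_succ]

theorem lintegral_fintype_prod_eq_prod {ι : Type*} [Fintype ι] {E : Type*}
    [MeasurableSpace E] {μ : ι → Measure E} [∀ i, SigmaFinite (μ i)]
    {f : ι → E → ℝ≥0∞} (hf : ∀ i, Measurable (f i)) :
    ∫⁻ x, ∏ i, f i (x i) ∂Measure.pi μ = ∏ i, ∫⁻ x, f i x ∂μ i := by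
  let e := (Fintype.equivFin ι).symm
  rw [(measurePreserving_piCongrLeft _ e).lintegral_map_equiv]
  simp_rw [← e.prod_comp, MeasurableEquiv.coe_piCongrLeft, Equiv.piCongrLeft_apply_apply]
  exact lintegral_fin_nat_prod_eq_prod fun i ↦ hf (e i)

theorem Measure.pi_withDensity {ι : Type*} [Fintype ι] {E : Type*}
    [MeasurableSpace E] {μ : ι → Measure E} [∀ i, SigmaFinite (μ i)]
    {f : ι → E → ℝ≥0∞} (hf : ∀ i, Measurable (f i))
    [∀ i, SigmaFinite ((μ i).withDensity (f i))] :
    Measure.pi (fun i ↦ (μ i).withDensity (f i))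
      = (Measure.pi μ).withDensity (fun x ↦ ∏ i, f i (x i)) := by
  refine Measure.pi_eq fun s hs ↦ ?_
  rw [withDensity_apply _ (.univ_pi hs), Measure.restrict_pi_pi,
    lintegral_fintype_prod_eq_prod hf]
  exact Finset.prod_congr rfl fun i _ ↦ (withDensity_apply _ (hs i)).symm

theorem Measure.pi_withDensity_ofReal {ι : Type*} [Fintype ι] {E : Type*}
    [MeasurableSpace E] {μ : ι → Measure E} [∀ i, SigmaFinite (μ i)]
    {f : ι → E → ℝ} (hf : ∀ i, Measurable (f i)) (hf0 : ∀ i x, 0 ≤ f i x) :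
    Measure.pi (fun i ↦ (μ i).withDensity fun x ↦ ENNReal.ofReal (f i x))
      = (Measure.pi μ).withDensity fun x ↦ ENNReal.ofReal (∏ i, f i (x i)) := by
  simp_rw [ENNReal.ofReal_prod_of_nonneg fun i _ ↦ hf0 i _]
  exact Measure.pi_withDensity fun i ↦ (hf i).ennreal_ofReal

end MeasureTheory

theorem sq_lintegral_ofReal_sqrt_mul_le {X : Type*} [MeasurableSpace X] {Λ : Measure X}
    {u w : X → ℝ} (hu : Measurable u) (hw : Measurable w) (hu0 : ∀ x, 0 ≤ u x)
    (hw0 : ∀ x, 0 ≤ w x) :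
    (∫⁻ x, ENNReal.ofReal √(u x * w x) ∂Λ) ^ 2
      ≤ (∫⁻ x, ENNReal.ofReal (u x) ∂Λ) * ∫⁻ x, ENNReal.ofReal (w x) ∂Λ := by
  have holder := ENNReal.lintegral_mul_norm_pow_le (μ := Λ) hu.ennreal_ofReal.aemeasurable
    hw.ennreal_ofReal.aemeasurable (p := 1 / 2) (q := 1 / 2) (by norm_num) (by norm_num)
    (by norm_num)
  have hsqrt (x : X) : ENNReal.ofReal (u x) ^ (1 / 2 : ℝ) * ENNReal.ofReal (w x) ^ (1 / 2 : ℝ)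
      = ENNReal.ofReal √(u x * w x) := by
    rw [ENNReal.ofReal_rpow_of_nonneg (hu0 x) (by norm_num),
      ENNReal.ofReal_rpow_of_nonneg (hw0 x) (by norm_num), ← Real.sqrt_eq_rpow,
      ← Real.sqrt_eq_rpow, ← ENNReal.ofReal_mul (Real.sqrt_nonneg _), Real.sqrt_mul (hu0 x)]
  simp_rw [hsqrt] at holder
  calc _ ≤ ((∫⁻ x, ENNReal.ofReal (u x) ∂Λ) ^ (1 / 2 : ℝ)
        * (∫⁻ x, ENNReal.ofReal (w x) ∂Λ) ^ (1 / 2 : ℝ)) ^ 2 := by gcongr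
    _ = _ := by
      rw [mul_pow, ← ENNReal.rpow_natCast, ← ENNReal.rpow_natCast, ← ENNReal.rpow_mul,
        ← ENNReal.rpow_mul]
      norm_num

theorem sq_sub_mul_mul_div_add_le (t a b u w : ℝ) (hu : 0 ≤ u) (hw : 0 ≤ w) :
    (a - b) ^ 2 * (u * w / (u + w)) ≤ u * (t - a) ^ 2 + w * (t - b) ^ 2 := by
  rcases (add_nonneg hu hw).eq_or_lt with h | h
  · obtain rfl : u = 0 := by linarith
    obtain rfl : w = 0 := by linarith
    simp
  · rw [mul_div_assoc', div_le_iff₀ h]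
    nlinarith [sq_nonneg ((t - a) * u + (t - b) * w), mul_nonneg hu hw]

noncomputable def hellingerAffinity {X : Type*} [MeasurableSpace X] (Λ : Measure X)
    (f g : X → ℝ) : ℝ≥0∞ :=
  ∫⁻ x, ENNReal.ofReal √(f x * g x) ∂Λ

/-- Le Cam's two-point bound. Pointwise `(a - b)² f g / (f + g) ≤ f (T - a)² + g (T - b)²`, and
by Cauchy–Schwarz `(∫ √(f g))² ≤ ∫ f g / (f + g) · ∫ (f + g)`. -/
theorem ofReal_sq_sub_mul_hellingerAffinity_sq_le {X : Type*} [MeasurableSpace X]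
    (Λ : Measure X) {f g T : X → ℝ} (hf : Measurable f) (hg : Measurable g)
    (hf0 : ∀ x, 0 ≤ f x) (hg0 : ∀ x, 0 ≤ g x) (hT : Measurable T) (a b : ℝ) :
    ENNReal.ofReal ((a - b) ^ 2) * hellingerAffinity Λ f g ^ 2
      ≤ (∫⁻ x, ENNReal.ofReal ((T x - a) ^ 2) ∂Λ.withDensity (fun x ↦ ENNReal.ofReal (f x))
          + ∫⁻ x, ENNReal.ofReal ((T x - b) ^ 2) ∂Λ.withDensity (fun x ↦ ENNReal.ofReal (g x)))
        * (∫⁻ x, ENNReal.ofReal (f x) ∂Λ + ∫⁻ x, ENNReal.ofReal (g x) ∂Λ) := by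
  set h : X → ℝ := fun x ↦ f x * g x / (f x + g x)
  have hh0 (x : X) : 0 ≤ h x :=
    div_nonneg (mul_nonneg (hf0 x) (hg0 x)) (add_nonneg (hf0 x) (hg0 x))
  have hmul (x : X) : h x * (f x + g x) = f x * g x := by
    rcases (add_nonneg (hf0 x) (hg0 x)).eq_or_lt with hx | hx
    · have : f x = 0 := by linarith [hf0 x, hg0 x]
      simp [h, this]
    · exact div_mul_cancel₀ _ hx.ne'
  have hmass : ∫⁻ x, ENNReal.ofReal (f x + g x) ∂Λ
      = ∫⁻ x, ENNReal.ofReal (f x) ∂Λ + ∫⁻ x, ENNReal.ofReal (g x) ∂Λ := by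
    simp_rw [ENNReal.ofReal_add (hf0 _) (hg0 _)]
    exact lintegral_add_left hf.ennreal_ofReal _
  have cauchySchwarz := sq_lintegral_ofReal_sqrt_mul_le (Λ := Λ) (u := h)
    (w := fun x ↦ f x + g x) ((hf.mul hg).div (hf.add hg)) (hf.add hg) hh0
    (fun x ↦ add_nonneg (hf0 x) (hg0 x))
  simp only [hmul, hmass] at cauchySchwarz
  have pointwise : ∫⁻ x, ENNReal.ofReal ((a - b) ^ 2) * ENNReal.ofReal (h x) ∂Λ
      ≤ ∫⁻ x, ENNReal.ofReal ((T x - a) ^ 2) ∂Λ.withDensity (fun x ↦ ENNReal.ofReal (f x))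
          + ∫⁻ x, ENNReal.ofReal ((T x - b) ^ 2) ∂Λ.withDensity (fun x ↦ ENNReal.ofReal (g x)) := by
    rw [lintegral_withDensity_eq_lintegral_mul _ hf.ennreal_ofReal
        ((hT.sub_const a).pow_const 2).ennreal_ofReal,
      lintegral_withDensity_eq_lintegral_mul _ hg.ennreal_ofReal
        ((hT.sub_const b).pow_const 2).ennreal_ofReal,
      ← lintegral_add_left (hf.ennreal_ofReal.mul ((hT.sub_const a).pow_const 2).ennreal_ofReal)]
    refine lintegral_mono fun x ↦ ?_
    simp only [Pi.mul_apply]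
    rw [← ENNReal.ofReal_mul (sq_nonneg _), ← ENNReal.ofReal_mul (hf0 x),
      ← ENNReal.ofReal_mul (hg0 x), ← ENNReal.ofReal_add (mul_nonneg (hf0 x) (sq_nonneg _))
        (mul_nonneg (hg0 x) (sq_nonneg _))]
    exact ENNReal.ofReal_le_ofReal (sq_sub_mul_mul_div_add_le _ _ _ _ _ (hf0 x) (hg0 x))
  calc
    _ ≤ ENNReal.ofReal ((a - b) ^ 2) * ((∫⁻ x, ENNReal.ofReal (h x) ∂Λ)
        * (∫⁻ x, ENNReal.ofReal (f x) ∂Λ + ∫⁻ x, ENNReal.ofReal (g x) ∂Λ)) :=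
      mul_le_mul_right cauchySchwarz _
    _ ≤ _ := by
      rw [← mul_assoc, ← lintegral_const_mul' _ _ ENNReal.ofReal_ne_top]
      gcongr

theorem hellingerAffinity_pi {ι : Type*} [Fintype ι] {E : Type*} [MeasurableSpace E]
    (Λ : ι → Measure E) [∀ i, SigmaFinite (Λ i)] {f g : ι → E → ℝ}
    (hf : ∀ i, Measurable (f i)) (hg : ∀ i, Measurable (g i))
    (hf0 : ∀ i x, 0 ≤ f i x) (hg0 : ∀ i x, 0 ≤ g i x) :
    hellingerAffinity (Measure.pi Λ) (fun x ↦ ∏ i, f i (x i)) (fun x ↦ ∏ i, g i (x i))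
      = ∏ i, hellingerAffinity (Λ i) (f i) (g i) := by
  have hprod (x : ι → E) : ENNReal.ofReal √((∏ i, f i (x i)) * ∏ i, g i (x i))
      = ∏ i, ENNReal.ofReal √(f i (x i) * g i (x i)) := by
    rw [← Finset.prod_mul_distrib,
      Real.sqrt_prod _ fun i _ ↦ mul_nonneg (hf0 i (x i)) (hg0 i (x i)),
      ENNReal.ofReal_prod_of_nonneg fun i _ ↦ Real.sqrt_nonneg _]
  simp_rw [hellingerAffinity, hprod]
  exact lintegral_fintype_prod_eq_prod fun i ↦
    (((hf i).mul (hg i)).sqrt).ennreal_ofReal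

theorem sqrt_gaussianPDFReal_mul (u v : ℝ≥0) (hu : u ≠ 0) (hv : v ≠ 0) (x : ℝ) :
    √(gaussianPDFReal 0 u x * gaussianPDFReal 0 v x)
      = (√(2 * π * √(u * v)))⁻¹ * Real.exp (-((u + v) / (4 * u * v)) * x ^ 2) := by
  have hu' : (0 : ℝ) < u := by positivity
  have hv' : (0 : ℝ) < v := by positivity
  rw [gaussianPDFReal, gaussianPDFReal, mul_mul_mul_comm, ← Real.exp_add, ← mul_inv,
    ← Real.sqrt_mul (by positivity), Real.sqrt_mul (by positivity), Real.sqrt_inv,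
    ← Real.exp_half]
  congr 2
  · rw [show 2 * π * u * (2 * π * v) = (2 * π) ^ 2 * (u * v) by ring,
      Real.sqrt_mul (by positivity), Real.sqrt_sq (by positivity)]
  · field_simp
    ring

theorem hellingerAffinity_gaussianPDFReal (u v : ℝ≥0) (hu : u ≠ 0) (hv : v ≠ 0) :
    hellingerAffinity volume (gaussianPDFReal 0 u) (gaussianPDFReal 0 v)
      = ENNReal.ofReal √(2 * √(u * v) / (u + v)) := by
  have hu' : (0 : ℝ) < u := by positivity
  have hv' : (0 : ℝ) < v := by positivity
  have hb : (0 : ℝ) < (u + v) / (4 * u * v) := by positivity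
  simp_rw [hellingerAffinity, sqrt_gaussianPDFReal_mul u v hu hv]
  rw [← ofReal_integral_eq_lintegral_ofReal ((integrable_exp_neg_mul_sq hb).const_mul _)
      (ae_of_all _ fun x ↦ by positivity), integral_const_mul, integral_gaussian,
    ← Real.sqrt_inv, ← Real.sqrt_mul (by positivity)]
  congr 2
  field_simp
  rw [Real.sq_sqrt (by positivity)]
  ring

theorem gaussianVec_of_posSemidef {ι : Type*} [Fintype ι] [DecidableEq ι]
    {S : Matrix ι ι ℝ} (hS : S.PosSemidef) :
    gaussianVec S = (stdGaussian ι).map (cfc Real.sqrt S).mulVec := by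
  rw [gaussianVec, dif_pos hS, hS.1.cfc_eq, IsHermitian.cfc, Unitary.conjStarAlgAut_apply]

theorem gaussianVec_diagonal_const {ι : Type*} [Fintype ι] [DecidableEq ι] (v : ℝ≥0) :
    gaussianVec (diagonal fun _ : ι ↦ (v : ℝ)) = Measure.pi fun _ ↦ gaussianReal 0 v := by
  have hscalar (c : ℝ) : diagonal (fun _ : ι ↦ c) = algebraMap ℝ (Matrix ι ι ℝ) c := by
    rw [algebraMap_eq_diagonal]; rfl
  have hsqrt : (diagonal fun _ : ι ↦ √(v : ℝ)).mulVec = fun x i ↦ √(v : ℝ) * x i :=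
    funext fun x ↦ funext fun i ↦ mulVec_diagonal _ _ _
  have hmap : (gaussianReal 0 1).map (√(v : ℝ) * ·) = gaussianReal 0 v := by
    rw [gaussianReal_map_const_mul, mul_zero]
    congr
    ext
    simp
  have hpsd : (diagonal fun _ : ι ↦ (v : ℝ)).PosSemidef :=
    posSemidef_diagonal_iff.mpr fun _ ↦ v.2
  rw [gaussianVec_of_posSemidef hpsd, hscalar,
    cfc_algebraMap, ← hscalar, hsqrt, _root_.stdGaussian,
    Measure.pi_map_pi fun _ ↦ (measurable_const_mul _).aemeasurable]
  simp_rw [hmap]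

section GaussianSample

variable {ι : Type*} [Fintype ι] (n : ℕ)

noncomputable def gaussianSampleDensity (v : ℝ≥0) (X : Fin n → ι → ℝ) : ℝ :=
  ∏ k, ∏ i, gaussianPDFReal 0 v (X k i)

theorem measurable_gaussianSampleDensity (v : ℝ≥0) :
    Measurable (gaussianSampleDensity (ι := ι) n v) :=
  Finset.measurable_prod _ fun k _ ↦ Finset.measurable_prod _ fun i _ ↦
    (measurable_gaussianPDFReal 0 v).comp ((measurable_pi_apply i).comp (measurable_pi_apply k))

theorem gaussianSampleDensity_nonneg (v : ℝ≥0) (X : Fin n → ι → ℝ) :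
    0 ≤ gaussianSampleDensity n v X :=
  Finset.prod_nonneg fun _ _ ↦ Finset.prod_nonneg fun _ _ ↦ gaussianPDFReal_nonneg 0 v _

theorem sampleMeasure_diagonal_const [DecidableEq ι] {v : ℝ≥0} (hv : v ≠ 0) :
    sampleMeasure n (diagonal fun _ : ι ↦ (v : ℝ))
      = volume.withDensity fun X ↦ ENNReal.ofReal (gaussianSampleDensity n v X) := by
  have hcoord : Measure.pi (fun _ : ι ↦ gaussianReal 0 v)
      = volume.withDensity fun y ↦ ENNReal.ofReal (∏ i, gaussianPDFReal 0 v (y i)) := by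
    simp_rw [gaussianReal_of_var_ne_zero 0 hv]
    exact Measure.pi_withDensity_ofReal (fun _ ↦ measurable_gaussianPDFReal 0 v)
      fun _ ↦ gaussianPDFReal_nonneg 0 v
  rw [sampleMeasure, gaussianVec_diagonal_const, hcoord]
  exact Measure.pi_withDensity_ofReal
    (fun _ ↦ Finset.measurable_prod _ fun i _ ↦
      (measurable_gaussianPDFReal 0 v).comp (measurable_pi_apply i))
    fun _ _ ↦ Finset.prod_nonneg fun _ _ ↦ gaussianPDFReal_nonneg 0 v _

theorem lintegral_gaussianSampleDensity [DecidableEq ι] {v : ℝ≥0} (hv : v ≠ 0) :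
    ∫⁻ X, ENNReal.ofReal (gaussianSampleDensity (ι := ι) n v X) = 1 := by
  have : IsProbabilityMeasure (sampleMeasure n (diagonal fun _ : ι ↦ (v : ℝ))) := by
    rw [sampleMeasure, gaussianVec_diagonal_const]; infer_instance
  rw [← setLIntegral_univ, ← withDensity_apply _ .univ, ← sampleMeasure_diagonal_const n hv,
    measure_univ]

theorem hellingerAffinity_gaussianSampleDensity {u v : ℝ≥0} (hu : u ≠ 0) (hv : v ≠ 0) :
    hellingerAffinity volume (gaussianSampleDensity (ι := ι) n u) (gaussianSampleDensity n v)
      = ENNReal.ofReal √(2 * √(u * v) / (u + v)) ^ (n * Fintype.card ι) := by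
  have hcoord : hellingerAffinity volume (fun y : ι → ℝ ↦ ∏ i, gaussianPDFReal 0 u (y i))
      (fun y ↦ ∏ i, gaussianPDFReal 0 v (y i))
        = ENNReal.ofReal √(2 * √(u * v) / (u + v)) ^ Fintype.card ι := by
    rw [volume_pi, hellingerAffinity_pi _ (fun _ ↦ measurable_gaussianPDFReal 0 u)
      (fun _ ↦ measurable_gaussianPDFReal 0 v) (fun _ ↦ gaussianPDFReal_nonneg 0 u)
      (fun _ ↦ gaussianPDFReal_nonneg 0 v)]
    simp [hellingerAffinity_gaussianPDFReal u v hu hv]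
  have hsample := hellingerAffinity_pi (fun _ : Fin n ↦ (volume : Measure (ι → ℝ)))
    (f := fun _ y ↦ ∏ i, gaussianPDFReal 0 u (y i)) (g := fun _ y ↦ ∏ i, gaussianPDFReal 0 v (y i))
    (fun _ ↦ Finset.measurable_prod _ fun i _ ↦
      (measurable_gaussianPDFReal 0 u).comp (measurable_pi_apply i))
    (fun _ ↦ Finset.measurable_prod _ fun i _ ↦
      (measurable_gaussianPDFReal 0 v).comp (measurable_pi_apply i))
    (fun _ _ ↦ Finset.prod_nonneg fun _ _ ↦ gaussianPDFReal_nonneg 0 u _)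
    (fun _ _ ↦ Finset.prod_nonneg fun _ _ ↦ gaussianPDFReal_nonneg 0 v _)
  rw [hcoord, Finset.prod_const, Finset.card_univ, Fintype.card_fin, ← pow_mul,
    mul_comm (Fintype.card ι)] at hsample
  exact hsample

end GaussianSample

section FrobeniusRisk

variable {ι : Type*} [Fintype ι] [DecidableEq ι] (n : ℕ)

noncomputable def frobeniusRisk (Fhat : (Fin n → ι → ℝ) → ℝ) (S : Matrix ι ι ℝ) : ℝ≥0∞ :=
  ∫⁻ X, ENNReal.ofReal ((Fhat X - ∑ i, ∑ j, S i j ^ 2) ^ 2) ∂sampleMeasure n S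

theorem sum_sum_sq_diagonal_const (c : ℝ) :
    ∑ i, ∑ j, (diagonal fun _ : ι ↦ c) i j ^ 2 = Fintype.card ι * c ^ 2 := by
  simp [diagonal_apply, apply_ite (· ^ 2)]

theorem ofReal_mul_pow_le_frobeniusRisk_add {Fhat : (Fin n → ι → ℝ) → ℝ} (hF : Measurable Fhat)
    {u v : ℝ≥0} (hu : u ≠ 0) (hv : v ≠ 0) :
    ENNReal.ofReal ((Fintype.card ι * ((u : ℝ) ^ 2 - (v : ℝ) ^ 2)) ^ 2)
        * ENNReal.ofReal (2 * √(u * v) / (u + v)) ^ (n * Fintype.card ι)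
      ≤ (frobeniusRisk n Fhat (diagonal fun _ ↦ (u : ℝ))
          + frobeniusRisk n Fhat (diagonal fun _ ↦ (v : ℝ))) * 2 := by
  have h := ofReal_sq_sub_mul_hellingerAffinity_sq_le volume
    (measurable_gaussianSampleDensity n u) (measurable_gaussianSampleDensity n v)
    (gaussianSampleDensity_nonneg n u) (gaussianSampleDensity_nonneg n v) hF
    (Fintype.card ι * (u : ℝ) ^ 2) (Fintype.card ι * (v : ℝ) ^ 2)
  rw [hellingerAffinity_gaussianSampleDensity n hu hv, lintegral_gaussianSampleDensity n hu,
    lintegral_gaussianSampleDensity n hv, ← sampleMeasure_diagonal_const n hu,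
    ← sampleMeasure_diagonal_const n hv, ← pow_mul, mul_comm _ 2, pow_mul,
    ← ENNReal.ofReal_pow (Real.sqrt_nonneg _), Real.sq_sqrt (by positivity), ← mul_sub,
    one_add_one_eq_two] at h
  simpa only [frobeniusRisk, sum_sum_sq_diagonal_const] using h

end FrobeniusRisk

theorem one_sub_sq_le_two_mul_div_one_add_sq (s : ℝ) : 1 - (1 - s) ^ 2 ≤ 2 * s / (1 + s ^ 2) := by
  rw [le_div_iff₀ (by positivity)]
  nlinarith [sq_nonneg (s * (s - 1))]

theorem three_div_four_le_pow_two_mul_div {N : ℕ} {δ : ℝ} (hδ0 : 0 ≤ δ) (hδ1 : δ ≤ 1)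
    (hNδ : N * δ ^ 2 ≤ 1 / 4) :
    3 / 4 ≤ (2 * (1 - δ) / (1 + (1 - δ) ^ 2)) ^ N :=
  calc (3 / 4 : ℝ)
    _ ≤ 1 + N * -δ ^ 2 := by linarith
    _ ≤ (1 + -δ ^ 2) ^ N := one_add_mul_le_pow (by nlinarith) N
    _ ≤ (2 * (1 - δ) / (1 + (1 - δ) ^ 2)) ^ N := by
      gcongr
      · nlinarith
      · simpa [← sub_eq_add_neg] using one_sub_sq_le_two_mul_div_one_add_sq (1 - δ)

theorem three_div_sixteen_mul_div_le {n p : ℕ} (hn : 1 ≤ n) {δ : ℝ} (hδ0 : 0 ≤ δ)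
    (hδ1 : δ ≤ 1) (hNδ : (n * p : ℝ) * δ ^ 2 = 1 / 4) :
    3 / 32 * p / n * 2
      ≤ (p * (1 ^ 2 - ((1 - δ) ^ 2) ^ 2)) ^ 2 * (2 * (1 - δ) / (1 + (1 - δ) ^ 2)) ^ (n * p) := by
  have hn0 : (0 : ℝ) < n := by exact_mod_cast hn
  have hsep : δ ≤ 1 - (1 - δ) ^ 4 := by
    linarith [pow_le_of_le_one (by linarith : (0 : ℝ) ≤ 1 - δ) (by linarith) (by norm_num : 4 ≠ 0)]
  have haff := three_div_four_le_pow_two_mul_div (N := n * p) hδ0 hδ1 (by push_cast; linarith)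
  calc (3 / 32 * p / n * 2 : ℝ)
    _ = (p * δ) ^ 2 * (3 / 4) := by
      rw [show ((p : ℝ) * δ) ^ 2 = p * ((n * p) * δ ^ 2) / n by field_simp, hNδ]
      ring
    _ ≤ _ := by
      gcongr
      linarith

theorem exists_ofReal_le_frobeniusRisk_add {n p : ℕ} (hn : 1 ≤ n) (hp : 1 ≤ p)
    {Fhat : (Fin n → Fin p → ℝ) → ℝ} (hF : Measurable Fhat) :
    ∃ v : ℝ≥0, (v : ℝ) ≤ 1 ∧ ENNReal.ofReal (3 / 32 * p / n)
      ≤ frobeniusRisk n Fhat (diagonal fun _ ↦ ((1 : ℝ≥0) : ℝ))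
        + frobeniusRisk n Fhat (diagonal fun _ ↦ (v : ℝ)) := by
  have hN : (1 : ℝ) ≤ n * p := by norm_cast; nlinarith
  set δ : ℝ := 1 / (2 * √(n * p : ℝ))
  have hsqrt : 1 ≤ √(n * p : ℝ) := Real.one_le_sqrt.mpr hN
  have hδ0 : 0 < δ := by positivity
  have hδ1 : δ ≤ 1 / 2 := by
    rw [div_le_div_iff₀ (by positivity) two_pos]; linarith
  have hNδ : (n * p : ℝ) * δ ^ 2 = 1 / 4 := by
    rw [div_pow, mul_pow, Real.sq_sqrt (by positivity)]
    field_simp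
    norm_num
  clear_value δ
  let v : ℝ≥0 := ⟨(1 - δ) ^ 2, sq_nonneg _⟩
  have hv : (v : ℝ) = (1 - δ) ^ 2 := rfl
  refine ⟨v, by rw [hv]; nlinarith, ?_⟩
  have h := ofReal_mul_pow_le_frobeniusRisk_add n hF one_ne_zero
    (v := v) (by rw [← NNReal.coe_ne_zero, hv]; exact pow_ne_zero 2 (by linarith))
  rw [Fintype.card_fin, hv, NNReal.coe_one, one_mul, Real.sqrt_sq (by linarith),
    ← ENNReal.ofReal_pow (div_nonneg (by linarith) (by positivity)),
    ← ENNReal.ofReal_mul (sq_nonneg _)] at h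
  refine (ENNReal.mul_le_mul_iff_left two_ne_zero ENNReal.ofNat_ne_top).mp (le_trans ?_ h)
  rw [← ENNReal.ofReal_ofNat 2, ← ENNReal.ofReal_mul (by positivity)]
  exact ENNReal.ofReal_le_ofReal (three_div_sixteen_mul_div_le hn hδ0.le (by linarith) hNδ)

theorem diagonal_const_posSemidef_and_le_one {ι : Type*} [Fintype ι] [DecidableEq ι] {c : ℝ}
    (hc0 : 0 ≤ c) (hc1 : c ≤ 1) :
    (diagonal fun _ : ι ↦ c).PosSemidef ∧ (∀ i j, i ≠ j → (diagonal fun _ : ι ↦ c) i j = 0)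
      ∧ ∀ i, (diagonal fun _ : ι ↦ c) i i ≤ 1 :=
  ⟨posSemidef_diagonal_iff.mpr fun _ ↦ hc0, fun _ _ ↦ diagonal_apply_ne _, fun _ ↦ by simpa⟩

theorem le_or_le_of_ofReal_two_mul_le_add {a : ℝ} (ha : 0 ≤ a) {x y : ℝ≥0∞}
    (h : ENNReal.ofReal (2 * a) ≤ x + y) : ENNReal.ofReal a ≤ x ∨ ENNReal.ofReal a ≤ y := by
  by_contra! hlt
  rw [two_mul, ENNReal.ofReal_add ha ha] at h
  exact (ENNReal.add_lt_add hlt.1 hlt.2).not_ge h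

/-- Proposition 1 (second claim): there is a universal constant `C > 0` such that for every
estimator `F̂` of the squared Frobenius norm `‖Σ‖_F² = ∑_{i,j} σ_ij²`, the worst-case risk
over diagonal covariance matrices with entries bounded by 1 is at least `C p / n`. -/
theorem frobenius_functional_lower_bound :
    ∃ C : ℝ, 0 < C ∧
      ∀ (n p : ℕ), 1 ≤ n → 1 ≤ p →
        ∀ Fhat : (Fin n → Fin p → ℝ) → ℝ, Measurable Fhat →
          ∃ S : Matrix (Fin p) (Fin p) ℝ,
            S.PosSemidef ∧ (∀ i j, i ≠ j → S i j = 0) ∧ (∀ i, S i i ≤ 1) ∧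
            ENNReal.ofReal (C * p / n) ≤
              ∫⁻ X, ENNReal.ofReal ((Fhat X - ∑ i, ∑ j, (S i j) ^ 2) ^ 2)
                ∂(sampleMeasure n S) := by
  refine ⟨3 / 64, by norm_num, fun n p hn hp Fhat hF ↦ ?_⟩
  obtain ⟨v, hv1, hsum⟩ := exists_ofReal_le_frobeniusRisk_add hn hp hF
  rw [show (3 / 32 * p / n : ℝ) = 2 * (3 / 64 * p / n) by ring] at hsum
  rcases le_or_le_of_ofReal_two_mul_le_add (by positivity) hsum with h | h
  · obtain ⟨hpsd, hdiag, hle⟩ :=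
      diagonal_const_posSemidef_and_le_one (ι := Fin p) zero_le_one le_rfl
    exact ⟨_, hpsd, hdiag, hle, h⟩
  · obtain ⟨hpsd, hdiag, hle⟩ := diagonal_const_posSemidef_and_le_one (ι := Fin p) v.2 hv1
    exact ⟨_, hpsd, hdiag, hle, h⟩
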